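/- For all real α, β ≠ 0, γ, x, all λ ∈ ℕ with λ ≥ 1, and all n ≥ 0: A^{λ,x}_{n+1}(α,β,γ) = γ·A^{λ,x}_n(α,β,γ+α) + x·λ·β · Σ_{k=0}^{n} C(n,k) · A^{1,x}_k(α,β,γ+β+α) · A^{λ,x}_{n-k}(α,β,0). -/

import Mathlib

/-!
With `Δ` the forward difference of step `-β`, one has
`A^{λ,x}_n(α,β,γ) = (-1)^n Σ_k C(k+λ-1,k) x^k (Δ^k (·|α)_n)(-γ)`.
Under `Δ^k`, the factorization `(t|α)_{n+1} = t (t-α|α)_n` becomes a Leibniz rule, which yields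
the term `γ A_n(γ+α)` and a sum with shifted weights `C(m+λ,m)`. The Vandermonde convolution
`(u+v|α)_n = Σ_i C(n,i) (u|α)_i (v|α)_{n-i}` turns `Δ^{k₁+k₂}` into a binomial convolution of
differences, so the product `A^1 · A^λ` has the weights `Σ_{k≤m} C(k+λ-1,k) = C(m+λ,m)`
(hockey stick), which match.
-/

open Finset

/-- Generalized factorial polynomial `(t|α)_n = ∏_{j=0}^{n-1} (t - jα)`. -/
noncomputable def gfact (t α : ℝ) (n : ℕ) : ℝ := ∏ j ∈ Finset.range n, (t - j * α)

/-- Hsu–Shiue generalized Stirling numbers (explicit formula, β ≠ 0). -/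
noncomputable def HS (n k : ℕ) (α β γ : ℝ) : ℝ :=
  (1 / (β ^ k * (Nat.factorial k : ℝ))) *
    ∑ s ∈ Finset.range (k + 1), (-1 : ℝ) ^ (k - s) * (Nat.choose k s : ℝ) * gfact (β * s + γ) α n

/-- Second-type higher order generalized geometric polynomials. -/
noncomputable def A (lam : ℕ) (x : ℝ) (n : ℕ) (α β γ : ℝ) : ℝ :=
  ∑ k ∈ Finset.range (n + 1),
    (Nat.choose (k + lam - 1) k : ℝ) * (-1 : ℝ) ^ (n + k) * β ^ k * (Nat.factorial k : ℝ) *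
      HS n k α (-β) (-γ) * x ^ k

open Polynomial fwdDiff

section ForwardDifferences

variable {R : Type*} [CommRing R]

lemma fwdDiff_iter_sum_mul {ι : Type*} (s : Finset ι) (a : ι → R) (g : ι → R → R) (h : R)
    (k : ℕ) (y : R) :
    Δ_[h] ^[k] (fun t => ∑ i ∈ s, a i * g i t) y = ∑ i ∈ s, a i * Δ_[h] ^[k] (g i) y := by
  have hfun : (fun t => ∑ i ∈ s, a i * g i t) = ∑ i ∈ s, a i • g i := by
    ext t; simp [Finset.sum_apply]
  simp [hfun, Finset.sum_apply]

lemma fwdDiff_zero_iter_succ (f : R → R) (k : ℕ) : Δ_[0] ^[k + 1] f = 0 := by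
  ext y; simp [Function.iterate_succ_apply', fwdDiff]

lemma Polynomial.fwdDiff_iter_eval_eq_zero_of_natDegree_lt {P : R[X]} {k : ℕ}
    (hP : P.natDegree < k) (h y : R) : Δ_[h] ^[k] P.eval y = 0 := by
  have hQ : (P.comp (C h * X + C y)).natDegree < k :=
    natDegree_comp_le.trans_lt (by nlinarith [natDegree_linear_le (a := h) (b := y)])
  have := congr_fun (fwdDiff_iter_eq_zero_of_degree_lt hQ) 0
  rw [Pi.zero_apply, fwdDiff_iter_eq_sum_shift] at this
  rw [fwdDiff_iter_eq_sum_shift, ← this]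
  refine sum_congr rfl fun s _ => ?_
  simp only [eval_comp, eval_add, eval_mul, eval_C, eval_X, nsmul_eq_mul, mul_one, zero_add]
  ring_nf

lemma fwdDiff_iter_succ_mul_self (g : R → R) (h y : R) (k : ℕ) :
    Δ_[h] ^[k + 1] (fun t => t * g t) y
      = y * Δ_[h] ^[k + 1] g y + (k + 1) * h * Δ_[h] ^[k] g (y + h) := by
  induction k generalizing y with
  | zero =>
    simp only [zero_add, Function.iterate_one, Function.iterate_zero_apply, fwdDiff]
    push_cast
    ring
  | succ k ih =>
    have e₁ : Δ_[h] ^[k + 2] g y = Δ_[h] ^[k + 1] g (y + h) - Δ_[h] ^[k + 1] g y := by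
      rw [Function.iterate_succ_apply']; rfl
    have e₂ : Δ_[h] ^[k + 1] g (y + h) = Δ_[h] ^[k] g (y + h + h) - Δ_[h] ^[k] g (y + h) := by
      rw [Function.iterate_succ_apply']; rfl
    rw [Function.iterate_succ_apply', funext ih]
    simp only [fwdDiff]
    push_cast
    linear_combination (-y) * e₁ - (k + 1) * h * e₂

end ForwardDifferences

lemma gfact_succ (t α : ℝ) (n : ℕ) : gfact t α (n + 1) = t * gfact (t - α) α n := by
  rw [gfact, prod_range_succ', mul_comm, gfact]
  simp only [Nat.cast_zero, zero_mul, sub_zero, Nat.cast_succ]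
  congr 1
  exact prod_congr rfl fun j _ => by ring

lemma gfact_succ' (t α : ℝ) (n : ℕ) : gfact t α (n + 1) = gfact t α n * (t - n * α) :=
  prod_range_succ _ _

lemma exists_natDegree_le_eval_eq_gfact (α : ℝ) (n : ℕ) :
    ∃ P : ℝ[X], P.natDegree ≤ n ∧ (gfact · α n) = P.eval := by
  refine ⟨∏ j ∈ range n, (X - C ((j : ℝ) * α)), (natDegree_prod_le _ _).trans_eq ?_, ?_⟩
  · simp only [natDegree_X_sub_C, sum_const, card_range, smul_eq_mul, mul_one]
  · ext t; simp [gfact, eval_prod]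

lemma gfact_add (u v α : ℝ) (n : ℕ) :
    gfact (u + v) α n
      = ∑ ij ∈ antidiagonal n, (n.choose ij.1 : ℝ) * (gfact u α ij.1 * gfact v α ij.2) := by
  induction n with
  | zero => simp [gfact]
  | succ n ih =>
    rw [Finset.sum_antidiagonal_choose_succ_mul (fun i j => gfact u α i * gfact v α j),
      ← sum_add_distrib, gfact_succ', ih, sum_mul]
    refine sum_congr rfl fun ij hij => ?_
    rw [HasAntidiagonal.mem_antidiagonal] at hij
    rw [Nat.choose_symm_of_eq_add hij.symm, gfact_succ', gfact_succ', ← hij]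
    push_cast
    ring

section FwdDiffGFact

variable (α h : ℝ)

lemma fwdDiff_iter_gfact_eq_zero {n k : ℕ} (hnk : n < k) (y : ℝ) :
    Δ_[h] ^[k] (gfact · α n) y = 0 := by
  obtain ⟨P, hP, hgfact⟩ := exists_natDegree_le_eval_eq_gfact α n
  rw [hgfact]
  exact fwdDiff_iter_eval_eq_zero_of_natDegree_lt (hP.trans_lt hnk) h y

lemma fwdDiff_iter_gfact_succ (n k : ℕ) (y : ℝ) :
    Δ_[h] ^[k] (gfact · α (n + 1)) y
      = y * Δ_[h] ^[k] (gfact · α n) (y - α)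
        + k * h * Δ_[h] ^[k - 1] (gfact · α n) (y + h - α) := by
  have hmul : (gfact · α (n + 1)) = fun t => t * gfact (t + -α) α n := by
    ext t; rw [gfact_succ, sub_eq_add_neg]
  cases k with
  | zero => simp [gfact_succ]
  | succ k =>
    have hshift := fwdDiff_iter_comp_add h (gfact · α n) (-α)
    rw [hmul, fwdDiff_iter_succ_mul_self, hshift, hshift]
    simp [sub_eq_add_neg]

lemma fwdDiff_iter_add_gfact (n k₁ k₂ : ℕ) (c : ℝ) :
    Δ_[h] ^[k₁ + k₂] (gfact · α n) c
      = ∑ ij ∈ antidiagonal n, (n.choose ij.1 : ℝ)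
          * (Δ_[h] ^[k₁] (gfact · α ij.1) c * Δ_[h] ^[k₂] (gfact · α ij.2) 0) := by
  have inner : Δ_[h] ^[k₂] (gfact · α n) = fun u => ∑ ij ∈ antidiagonal n,
      (n.choose ij.1 * Δ_[h] ^[k₂] (gfact · α ij.2) 0) * gfact u α ij.1 := by
    ext u
    have hshift := fwdDiff_iter_comp_add h (gfact · α n) u k₂ 0
    rw [zero_add] at hshift
    simp only [← hshift, add_comm _ u, gfact_add u, ← mul_assoc]
    rw [fwdDiff_iter_sum_mul]
    exact sum_congr rfl fun ij _ => by ring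
  rw [Function.iterate_add_apply, inner, fwdDiff_iter_sum_mul]
  exact sum_congr rfl fun ij _ => by ring

end FwdDiffGFact

lemma sum_range_choose_add_sub_one (lam m : ℕ) :
    ∑ k ∈ range (m + 1), (k + lam - 1).choose k = (m + lam).choose m := by
  induction m with
  | zero => simp
  | succ m ih =>
    rw [sum_range_succ, ih, show m + 1 + lam - 1 = m + lam by omega,
      show m + 1 + lam = m + lam + 1 by omega, Nat.choose_succ_succ']

lemma sum_range_sum_range_mul_add {R : Type*} [CommSemiring R] (w F : ℕ → R) (n : ℕ)
    (hF : ∀ m, n < m → F m = 0) :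
    ∑ i ∈ range (n + 1), ∑ j ∈ range (n + 1), w i * F (i + j)
      = ∑ m ∈ range (n + 1), (∑ i ∈ range (m + 1), w i) * F m := by
  calc ∑ i ∈ range (n + 1), ∑ j ∈ range (n + 1), w i * F (i + j)
      = ∑ i ∈ range (n + 1), ∑ j ∈ range (n + 1 - i), w i * F (i + j) := by
        refine sum_congr rfl fun i _ => (sum_subset (range_subset_range.2 (by omega)) ?_).symm
        intro j hj hj'
        simp only [mem_range] at hj hj'
        rw [hF _ (by omega), mul_zero]
    _ = ∑ m ∈ range (n + 1), ∑ i ∈ range (m + 1), w i * F (i + (m - i)) :=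
        (sum_range_diag_flip _ fun i j => w i * F (i + j)).symm
    _ = ∑ m ∈ range (n + 1), (∑ i ∈ range (m + 1), w i) * F m := by
        refine sum_congr rfl fun m _ => ?_
        rw [sum_mul]
        refine sum_congr rfl fun i hi => ?_
        rw [Nat.add_sub_cancel' (Nat.lt_succ_iff.mp (mem_range.mp hi))]

noncomputable def geomFwdDiff (lam : ℕ) (x : ℝ) (n : ℕ) (α h y : ℝ) : ℝ :=
  ∑ k ∈ range (n + 1), ((k + lam - 1).choose k : ℝ) * x ^ k * Δ_[h] ^[k] (gfact · α n) y

section GeomFwdDiff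

variable (lam : ℕ) (x α h : ℝ)

lemma geomFwdDiff_eq_sum_range {n N : ℕ} (hnN : n ≤ N) (y : ℝ) :
    geomFwdDiff lam x n α h y
      = ∑ k ∈ range (N + 1),
          ((k + lam - 1).choose k : ℝ) * x ^ k * Δ_[h] ^[k] (gfact · α n) y := by
  refine sum_subset (range_subset_range.2 (by omega)) fun k _ hk => ?_
  rw [fwdDiff_iter_gfact_eq_zero α h (by simpa using hk), mul_zero]

lemma geomFwdDiff_succ_eq (n : ℕ) (y : ℝ) :
    geomFwdDiff lam x (n + 1) α h y
      = y * geomFwdDiff lam x n α h (y - α)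
        + x * lam * h * ∑ m ∈ range (n + 1),
            ((m + lam).choose m : ℝ) * x ^ m * Δ_[h] ^[m] (gfact · α n) (y + h - α) := by
  have hchoose (m : ℕ) : ((m + 1 + lam - 1).choose (m + 1) : ℝ) * (m + 1)
      = lam * (m + lam).choose m := by
    have := Nat.choose_succ_right_eq (m + lam) m
    rw [show m + lam - m = lam by omega] at this
    rw [show m + 1 + lam - 1 = m + lam by omega, mul_comm (lam : ℝ)]
    exact_mod_cast this
  have hshifted : x * lam * h * ∑ m ∈ range (n + 1),
        ((m + lam).choose m : ℝ) * x ^ m * Δ_[h] ^[m] (gfact · α n) (y + h - α)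
      = ∑ k ∈ range (n + 1 + 1), ((k + lam - 1).choose k : ℝ) * x ^ k
          * (k * h * Δ_[h] ^[k - 1] (gfact · α n) (y + h - α)) := by
    rw [sum_range_succ' _ (n + 1), mul_sum]
    simp only [Nat.cast_zero, zero_mul, mul_zero, add_zero, Nat.add_sub_cancel]
    refine sum_congr rfl fun m _ => ?_
    push_cast
    linear_combination (-x ^ (m + 1) * h * Δ_[h] ^[m] (gfact · α n) (y + h - α)) * hchoose m
  rw [geomFwdDiff, geomFwdDiff_eq_sum_range lam x α h (Nat.le_succ n), hshifted, mul_sum,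
    ← sum_add_distrib]
  refine sum_congr rfl fun k _ => ?_
  rw [fwdDiff_iter_gfact_succ]
  ring

lemma sum_choose_mul_fwdDiff_iter_gfact (n : ℕ) (c : ℝ) :
    ∑ m ∈ range (n + 1), ((m + lam).choose m : ℝ) * x ^ m * Δ_[h] ^[m] (gfact · α n) c
      = ∑ j ∈ range (n + 1), (n.choose j : ℝ)
          * geomFwdDiff 1 x j α h c * geomFwdDiff lam x (n - j) α h 0 := by
  calc ∑ m ∈ range (n + 1), ((m + lam).choose m : ℝ) * x ^ m * Δ_[h] ^[m] (gfact · α n) c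
      = ∑ i ∈ range (n + 1), ∑ k ∈ range (n + 1),
          ((i + lam - 1).choose i : ℝ) * (x ^ (i + k) * Δ_[h] ^[i + k] (gfact · α n) c) := by
        rw [sum_range_sum_range_mul_add _ (fun m => x ^ m * Δ_[h] ^[m] (gfact · α n) c) n
          fun m hm => by simp [fwdDiff_iter_gfact_eq_zero α h hm]]
        refine sum_congr rfl fun m _ => ?_
        rw [← Nat.cast_sum, sum_range_choose_add_sub_one, mul_assoc]
    _ = ∑ i ∈ range (n + 1), ∑ k ∈ range (n + 1), ∑ j ∈ range (n + 1),
          (n.choose j : ℝ) * (x ^ k * Δ_[h] ^[k] (gfact · α j) c)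
            * ((i + lam - 1).choose i * x ^ i * Δ_[h] ^[i] (gfact · α (n - j)) 0) := by
        refine sum_congr rfl fun i _ => sum_congr rfl fun k _ => ?_
        rw [add_comm i k, fwdDiff_iter_add_gfact, Nat.sum_antidiagonal_eq_sum_range_succ
          (fun a b => (n.choose a : ℝ) * (Δ_[h] ^[k] (gfact · α a) c * Δ_[h] ^[i] (gfact · α b) 0)),
          mul_sum, mul_sum]
        refine sum_congr rfl fun j _ => ?_
        rw [pow_add]
        ring
    _ = ∑ j ∈ range (n + 1), (n.choose j : ℝ)
          * geomFwdDiff 1 x j α h c * geomFwdDiff lam x (n - j) α h 0 := by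
        rw [sum_comm, sum_congr rfl fun k _ => sum_comm, sum_comm]
        refine sum_congr rfl fun j hj => ?_
        have hjn : j ≤ n := Nat.lt_succ_iff.mp (mem_range.mp hj)
        rw [geomFwdDiff_eq_sum_range 1 x α h hjn,
          geomFwdDiff_eq_sum_range lam x α h (Nat.sub_le n j), mul_assoc, sum_mul_sum, mul_sum]
        refine sum_congr rfl fun k _ => ?_
        rw [mul_sum]
        refine sum_congr rfl fun i _ => ?_
        simp only [Nat.add_sub_cancel, Nat.choose_self, Nat.cast_one, one_mul]
        ring

theorem geomFwdDiff_succ (n : ℕ) (y : ℝ) :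
    geomFwdDiff lam x (n + 1) α h y
      = y * geomFwdDiff lam x n α h (y - α)
        + x * lam * h * ∑ j ∈ range (n + 1), (n.choose j : ℝ)
            * geomFwdDiff 1 x j α h (y + h - α) * geomFwdDiff lam x (n - j) α h 0 := by
  rw [geomFwdDiff_succ_eq, sum_choose_mul_fwdDiff_iter_gfact]

end GeomFwdDiff

lemma HS_eq_fwdDiff_iter (n k : ℕ) (α β γ : ℝ) :
    HS n k α β γ = Δ_[β] ^[k] (gfact · α n) γ / (β ^ k * k.factorial) := by
  rw [HS, fwdDiff_iter_eq_sum_shift, one_div_mul_eq_div]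
  congr 1
  refine sum_congr rfl fun s _ => ?_
  simp only [zsmul_eq_mul, nsmul_eq_mul]
  push_cast
  ring_nf

lemma A_eq_geomFwdDiff (lam : ℕ) (x : ℝ) (n : ℕ) (α β γ : ℝ) :
    A lam x n α β γ = (-1) ^ n * geomFwdDiff lam x n α (-β) (-γ) := by
  rw [A, geomFwdDiff, mul_sum]
  refine sum_congr rfl fun k _ => ?_
  set Dk := Δ_[-β] ^[k] (gfact · α n) (-γ)
  -- At `β = 0` the division in `HS` is junk, but then `Dk = 0` for `k > 0` since `Δ_[0] = 0`.
  have hvanish : (-β) ^ k * k.factorial = 0 → Dk = 0 := by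
    intro h0
    obtain ⟨hβ, hk⟩ := pow_eq_zero_iff'.mp ((mul_eq_zero.mp h0).resolve_right (by positivity))
    obtain ⟨k, rfl⟩ := Nat.exists_eq_succ_of_ne_zero hk
    simp only [Dk, hβ, fwdDiff_zero_iter_succ, Pi.zero_apply]
  calc ((k + lam - 1).choose k : ℝ) * (-1) ^ (n + k) * β ^ k * k.factorial
        * HS n k α (-β) (-γ) * x ^ k
      = (-1) ^ n * ((k + lam - 1).choose k * x ^ k
          * ((-β) ^ k * k.factorial * Dk / ((-β) ^ k * k.factorial))) := by
        rw [HS_eq_fwdDiff_iter, neg_pow β, pow_add]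
        ring
    _ = (-1) ^ n * ((k + lam - 1).choose k * x ^ k * Dk) := by
        rw [mul_div_cancel_left_of_imp hvanish]

theorem stmt17_general (α β γ x : ℝ) (lam : ℕ) (n : ℕ) :
    A lam x (n + 1) α β γ =
      γ * A lam x n α β (γ + α) +
        x * lam * β *
          ∑ k ∈ Finset.range (n + 1),
            (Nat.choose n k : ℝ) * A 1 x k α β (γ + β + α) * A lam x (n - k) α β 0 := by
  have hsign (k : ℕ) (hk : k ∈ range (n + 1)) (a b : ℝ) :
      (n.choose k : ℝ) * ((-1) ^ k * a) * ((-1) ^ (n - k) * b)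
        = (-1) ^ n * (n.choose k * a * b) := by
    rw [← pow_mul_pow_sub (-1 : ℝ) (Nat.lt_succ_iff.mp (mem_range.mp hk))]
    ring
  simp only [A_eq_geomFwdDiff]
  rw [geomFwdDiff_succ, show -(γ + α) = -γ - α by ring, show -(γ + β + α) = -γ + -β - α by ring,
    neg_zero, sum_congr rfl fun k hk => hsign k hk _ _, ← mul_sum, pow_succ]
  ring

theorem stmt17 (α β γ x : ℝ) (hβ : β ≠ 0) (lam : ℕ) (hlam : 1 ≤ lam) (n : ℕ) :
    A lam x (n + 1) α β γ =
      γ * A lam x n α β (γ + α) +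
        x * lam * β *
          ∑ k ∈ Finset.range (n + 1),
            (Nat.choose n k : ℝ) * A 1 x k α β (γ + β + α) * A lam x (n - k) α β 0 :=
  stmt17_general α β γ x lam n
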